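/- The equivalence relation E generated by the maps S₀ and S₁ on the space of infinite subsets of ℕ is F_σ: E = ⋃ₙ Rₙ where each Rₙ is closed, with (x,y) ∈ Rₙ iff there exist k ≤ n, points x₀, …, x_{k-1} and binary strings s₀, …, s_{k-1} of length ≤ n such that x₀ = x, x_{k-1} = y, and for all i < k-1, xᵢ G x_{i+1} and xᵢ ≤ S_{sᵢ}(y). -/
import Mathlib


noncomputable def enum (x : Set ℕ) (n : ℕ) : ℕ := Nat.nth (· ∈ x) n
noncomputable def S0 (x : Set ℕ) : Set ℕ := Set.range (fun n => enum x (n+1))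
noncomputable def S1 (x : Set ℕ) : Set ℕ := Set.range (fun n => enum x (2*n+1))
def sle (x y : Set ℕ) : Prop := ∀ n, enum x n ≤ enum y n
def ll (a b : Set ℕ) : Prop := ∀ m, ∃ k, m < (a ∩ Set.Ioo (enum b k) (enum b (k+1))).ncard
def Estep (x y : Set ℕ) : Prop := x.Infinite ∧ (y = S0 x ∨ y = S1 x)
def E : Set ℕ → Set ℕ → Prop := Relation.EqvGen Estep
def G (x x' : Set ℕ) : Prop := x' = S0 x ∨ x' = S1 x ∨ x = S0 x' ∨ x = S1 x'
def toSet (f : ℕ → Bool) : Set ℕ := {n | f n = true}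
noncomputable def Sb (b : Bool) : Set ℕ → Set ℕ := if b then S1 else S0
noncomputable def Siter : List Bool → Set ℕ → Set ℕ
  | [], y => y
  | b :: rest, y => Siter rest (Sb b y)

def Rn (n : ℕ) :
    Set ({f : ℕ → Bool // (toSet f).Infinite} × {f : ℕ → Bool // (toSet f).Infinite}) :=
  {p | ∃ k, 0 < k ∧ k ≤ n ∧ ∃ xs : ℕ → Set ℕ, ∃ ss : ℕ → List Bool,
    xs 0 = toSet p.1.1 ∧ xs (k-1) = toSet p.2.1 ∧
    (∀ i < k, (ss i).length ≤ n ∧ (xs i).Infinite ∧ sle (xs i) (Siter (ss i) (toSet p.2.1))) ∧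
    (∀ i, i + 1 < k → G (xs i) (xs (i+1)))}

lemma setOf_mem (x : Set ℕ) : {n | n ∈ x} = x := rfl

lemma enum_strictMono {x : Set ℕ} (hx : x.Infinite) : StrictMono (enum x) :=
  Nat.nth_strictMono hx

lemma nth_range {f : ℕ → ℕ} (hf : StrictMono f) : Nat.nth (· ∈ Set.range f) = f := by
  have hinf : {n | n ∈ Set.range f}.Infinite :=
    Set.infinite_range_of_injective hf.injective
  exact ((Nat.nth_strictMono hinf).range_inj hf).mp
    (Nat.range_nth_of_infinite hinf)

lemma enum_S0 {x : Set ℕ} (hx : x.Infinite) (n : ℕ) : enum (S0 x) n = enum x (n+1) := by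
  have h : StrictMono (fun n => enum x (n+1)) :=
    fun a b hab => (enum_strictMono hx) (by omega)
  exact congrFun (nth_range h) n

lemma enum_S1 {x : Set ℕ} (hx : x.Infinite) (n : ℕ) : enum (S1 x) n = enum x (2*n+1) := by
  have h : StrictMono (fun n => enum x (2*n+1)) :=
    fun a b hab => (enum_strictMono hx) (by omega)
  exact congrFun (nth_range h) n

lemma S0_infinite {x : Set ℕ} (hx : x.Infinite) : (S0 x).Infinite :=
  Set.infinite_range_of_injective (fun a b h => by
    have := (enum_strictMono hx).injective h; omega)

lemma S1_infinite {x : Set ℕ} (hx : x.Infinite) : (S1 x).Infinite :=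
  Set.infinite_range_of_injective (fun a b h => by
    have := (enum_strictMono hx).injective h; omega)

lemma sle_refl (x : Set ℕ) : sle x x := fun _ => le_refl _
lemma sle_trans {x y z : Set ℕ} (h1 : sle x y) (h2 : sle y z) : sle x z :=
  fun n => (h1 n).trans (h2 n)

lemma sle_S0_self {x : Set ℕ} (hx : x.Infinite) : sle x (S0 x) := fun n => by
  rw [enum_S0 hx]; exact (enum_strictMono hx).monotone (by omega)
lemma sle_S1_self {x : Set ℕ} (hx : x.Infinite) : sle x (S1 x) := fun n => by
  rw [enum_S1 hx]; exact (enum_strictMono hx).monotone (by omega)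

lemma Sb_infinite {x : Set ℕ} (hx : x.Infinite) (b : Bool) : (Sb b x).Infinite := by
  cases b <;> simp [Sb, S0_infinite hx, S1_infinite hx]

lemma sle_Sb_self {x : Set ℕ} (hx : x.Infinite) (b : Bool) : sle x (Sb b x) := by
  cases b <;> simp [Sb, sle_S0_self hx, sle_S1_self hx]

lemma sle_mono {x y : Set ℕ} (hx : x.Infinite) (hy : y.Infinite) (h : sle x y) (b : Bool) :
    sle (Sb b x) (Sb b y) := by
  cases b <;> intro n <;> simp only [Sb, if_pos, if_neg, Bool.false_eq_true, ite_true, ite_false]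
  · rw [enum_S0 hx, enum_S0 hy]; exact h _
  · rw [enum_S1 hx, enum_S1 hy]; exact h _

lemma Siter_infinite {y : Set ℕ} (hy : y.Infinite) (s : List Bool) : (Siter s y).Infinite := by
  induction s generalizing y with
  | nil => exact hy
  | cons b rest ih => exact ih (Sb_infinite hy b)

lemma Siter_append (s : List Bool) (b : Bool) (y : Set ℕ) :
    Siter (s ++ [b]) y = Sb b (Siter s y) := by
  induction s generalizing y with
  | nil => rfl
  | cons c rest ih => simp [Siter, ih]

noncomputable def cnt (x : Set ℕ) (m : ℕ) : ℕ := @Nat.count (· ∈ x) (Classical.decPred _) m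

lemma lt_cnt_iff {x : Set ℕ} (hx : x.Infinite) {a b : ℕ} : a < cnt x b ↔ enum x a < b :=
  @Nat.lt_nth_iff_count_lt _ (Classical.decPred _) hx a b

lemma cnt_le_iff {x : Set ℕ} (hx : x.Infinite) {a b : ℕ} : cnt x a ≤ b ↔ a ≤ enum x b :=
  @Nat.count_le_iff_le_nth _ (Classical.decPred _) hx a b

lemma enum_cnt {x : Set ℕ} {n : ℕ} (h : n ∈ x) : enum x (cnt x n) = n :=
  @Nat.nth_count _ (Classical.decPred _) _ h

lemma cnt_enum {x : Set ℕ} (hx : x.Infinite) (n : ℕ) : cnt x (enum x n) = n :=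
  @Nat.count_nth_of_infinite _ (Classical.decPred _) hx n

lemma sle_iff_cnt {x z : Set ℕ} (hz : z.Infinite) :
    (x.Infinite ∧ sle x z) ↔ ∀ m, cnt z m ≤ cnt x m := by
  constructor
  · rintro ⟨hx, hsle⟩ m
    rcases Nat.eq_zero_or_pos (cnt z m) with h0 | hpos
    · omega
    · have h1 : enum z (cnt z m - 1) < m := (lt_cnt_iff hz).mp (by omega)
      have h2 : enum x (cnt z m - 1) < m := lt_of_le_of_lt (hsle _) h1
      have := (lt_cnt_iff hx).mpr h2
      omega
  · intro h
    have hx : x.Infinite := by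
      by_contra hfin
      rw [Set.not_infinite] at hfin
      set N := hfin.toFinset.card with hN
      have hb : ∀ m, cnt x m ≤ N := fun m =>
        @Nat.count_le_card _ (Classical.decPred _) hfin m
      have : cnt z (enum z (N+1)) = N+1 := cnt_enum hz _
      have := h (enum z (N+1))
      have := hb (enum z (N+1))
      omega
    refine ⟨hx, fun n => ?_⟩
    have h1 : n < cnt z (enum z n + 1) := (lt_cnt_iff hz).mpr (by omega)
    have h2 : n < cnt x (enum z n + 1) := lt_of_lt_of_le h1 (h _)
    have := (lt_cnt_iff hx).mp h2
    omega

lemma cnt_S0 {x : Set ℕ} (hx : x.Infinite) (m : ℕ) : cnt (S0 x) m = cnt x m - 1 := by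
  have h0 : (S0 x).Infinite := S0_infinite hx
  apply Nat.le_antisymm
  · rw [cnt_le_iff h0, enum_S0 hx]
    rcases Nat.eq_zero_or_pos (cnt x m) with hc | hc
    · have : m ≤ enum x 0 := (cnt_le_iff hx).mp (by omega)
      exact this.trans ((enum_strictMono hx).monotone (by omega))
    · have : m ≤ enum x (cnt x m) := (cnt_le_iff hx).mp (le_refl _)
      exact this.trans ((enum_strictMono hx).monotone (by omega))
  · rcases Nat.eq_zero_or_pos (cnt x m) with hc | hc
    · omega
    · rcases Nat.lt_or_ge (cnt x m) 2 with hc2 | hc2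
      · omega
      · have : enum (S0 x) (cnt x m - 2) < m := by
          rw [enum_S0 hx]
          have : cnt x m - 2 + 1 < cnt x m := by omega
          exact (lt_cnt_iff hx).mp this
        have := (lt_cnt_iff h0).mpr this
        omega

lemma cnt_S1 {x : Set ℕ} (hx : x.Infinite) (m : ℕ) : cnt (S1 x) m = cnt x m / 2 := by
  have h0 : (S1 x).Infinite := S1_infinite hx
  apply Nat.le_antisymm
  · rw [cnt_le_iff h0, enum_S1 hx]
    have : m ≤ enum x (cnt x m) := (cnt_le_iff hx).mp (le_refl _)
    exact this.trans ((enum_strictMono hx).monotone (by omega))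
  · rcases Nat.eq_zero_or_pos (cnt x m / 2) with hc | hc
    · omega
    · have : enum (S1 x) (cnt x m / 2 - 1) < m := by
        rw [enum_S1 hx]
        exact (lt_cnt_iff hx).mp (by omega)
      have := (lt_cnt_iff h0).mpr this
      omega

def gfun : List Bool → ℕ → ℕ
  | [], c => c
  | b :: rest, c => gfun rest (if b then c / 2 else c - 1)

lemma cnt_Sb {y : Set ℕ} (hy : y.Infinite) (b : Bool) (m : ℕ) :
    cnt (Sb b y) m = if b then cnt y m / 2 else cnt y m - 1 := by
  cases b <;> simp [Sb, cnt_S0 hy, cnt_S1 hy]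

lemma cnt_Siter {y : Set ℕ} (hy : y.Infinite) (s : List Bool) (m : ℕ) :
    cnt (Siter s y) m = gfun s (cnt y m) := by
  induction s generalizing y with
  | nil => rfl
  | cons b rest ih =>
    simp only [Siter, gfun, ih (Sb_infinite hy b), cnt_Sb hy]

lemma enum_mem {x : Set ℕ} (hx : x.Infinite) (n : ℕ) : enum x n ∈ x :=
  Nat.nth_mem_of_infinite hx n

lemma mem_S0_iff {x : Set ℕ} (hx : x.Infinite) (n : ℕ) :
    n ∈ S0 x ↔ n ∈ x ∧ 0 < cnt x n := by
  constructor
  · rintro ⟨k, rfl⟩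
    exact ⟨enum_mem hx _, by rw [cnt_enum hx]; omega⟩
  · rintro ⟨hn, hc⟩
    exact ⟨cnt x n - 1, by simp only []; rw [Nat.sub_add_cancel hc]; exact enum_cnt hn⟩

lemma mem_S1_iff {x : Set ℕ} (hx : x.Infinite) (n : ℕ) :
    n ∈ S1 x ↔ n ∈ x ∧ cnt x n % 2 = 1 := by
  constructor
  · rintro ⟨k, rfl⟩
    exact ⟨enum_mem hx _, by rw [cnt_enum hx]; omega⟩
  · rintro ⟨hn, hc⟩
    refine ⟨cnt x n / 2, ?_⟩
    simp only []
    have h2 : 2 * (cnt x n / 2) + 1 = cnt x n := by omega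
    rw [h2]; exact enum_cnt hn

lemma eq_S0_iff {x y : Set ℕ} (hx : x.Infinite) :
    y = S0 x ↔ ∀ n, (n ∈ y ↔ n ∈ x ∧ 0 < cnt x n) := by
  rw [Set.ext_iff]
  exact forall_congr' fun n => by rw [mem_S0_iff hx]

lemma eq_S1_iff {x y : Set ℕ} (hx : x.Infinite) :
    y = S1 x ↔ ∀ n, (n ∈ y ↔ n ∈ x ∧ cnt x n % 2 = 1) := by
  rw [Set.ext_iff]
  exact forall_congr' fun n => by rw [mem_S1_iff hx]

abbrev P := {f : ℕ → Bool // (toSet f).Infinite}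

def F0 (x y : Set ℕ) : Prop := ∀ n, (n ∈ y ↔ n ∈ x ∧ 0 < cnt x n)
def F1 (x y : Set ℕ) : Prop := ∀ n, (n ∈ y ↔ n ∈ x ∧ cnt x n % 2 = 1)
def G' (x y : Set ℕ) : Prop := F0 x y ∨ F1 x y ∨ F0 y x ∨ F1 y x

lemma G_iff_G' {x y : Set ℕ} (hx : x.Infinite) (hy : y.Infinite) : G x y ↔ G' x y := by
  unfold G G' F0 F1
  rw [eq_S0_iff hx, eq_S1_iff hx, eq_S0_iff hy, eq_S1_iff hy]

lemma cnt_toSet_eq (f : ℕ → Bool) (m : ℕ) :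
    cnt (toSet f) m = ∑ i ∈ Finset.range m, (if f i then 1 else 0) := by
  induction m with
  | zero => rfl
  | succ m ih =>
    rw [Finset.sum_range_succ, ← ih]
    show @Nat.count (· ∈ toSet f) (Classical.decPred _) (m+1) = _
    rw [Nat.count_succ]
    congr 1
    by_cases h : f m <;> simp [toSet, h]

lemma continuous_cnt (m : ℕ) : Continuous (fun f : ℕ → Bool => cnt (toSet f) m) := by
  have : (fun f : ℕ → Bool => cnt (toSet f) m)
      = fun f => ∑ i ∈ Finset.range m, (if f i then 1 else 0) := by
    funext f; exact cnt_toSet_eq f m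
  rw [this]
  refine continuous_finset_sum _ fun i _ => ?_
  exact Continuous.comp
    (continuous_of_discreteTopology (f := fun b : Bool => if b then (1:ℕ) else 0))
    (continuous_apply i)

def Cset (k : ℕ) (ss : ℕ → List Bool) : Set ((ℕ → ℕ → Bool) × (P × P)) :=
  {q | (∀ j, q.1 0 j = q.2.1.1 j) ∧ (∀ j, q.1 (k-1) j = q.2.2.1 j) ∧
    (∀ i < k, ∀ m, gfun (ss i) (cnt (toSet q.2.2.1) m) ≤ cnt (toSet (q.1 i)) m) ∧
    (∀ i, i+1 < k → G' (toSet (q.1 i)) (toSet (q.1 (i+1))))}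

lemma F0_iff (a b : ℕ → Bool) :
    F0 (toSet a) (toSet b) ↔ ∀ n, b n = (a n && decide (0 < cnt (toSet a) n)) := by
  unfold F0
  refine forall_congr' fun n => ?_
  show (b n = true ↔ a n = true ∧ 0 < cnt (toSet a) n) ↔ _
  by_cases h : 0 < cnt (toSet a) n <;> cases hb : b n <;> cases ha : a n <;> simp [h]

lemma F1_iff (a b : ℕ → Bool) :
    F1 (toSet a) (toSet b) ↔ ∀ n, b n = (a n && decide (cnt (toSet a) n % 2 = 1)) := by
  unfold F1
  refine forall_congr' fun n => ?_
  show (b n = true ↔ a n = true ∧ cnt (toSet a) n % 2 = 1) ↔ _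
  by_cases h : cnt (toSet a) n % 2 = 1 <;> cases hb : b n <;> cases ha : a n <;> simp [h]

lemma isClosed_F0 {Q : Type*} [TopologicalSpace Q] {a b : Q → ℕ → Bool}
    (ha : ∀ n, Continuous fun q => a q n) (hb : ∀ n, Continuous fun q => b q n) :
    IsClosed {q | F0 (toSet (a q)) (toSet (b q))} := by
  have : {q | F0 (toSet (a q)) (toSet (b q))}
      = ⋂ n, {q | b q n = (a q n && decide (0 < cnt (toSet (a q)) n))} := by
    ext q; simp only [Set.mem_iInter, Set.mem_setOf_eq, F0_iff]
  rw [this]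
  refine isClosed_iInter fun n => isClosed_eq (hb n) ?_
  have h1 : Continuous fun q => (a q n, cnt (toSet (a q)) n) :=
    (ha n).prodMk ((continuous_cnt n).comp (continuous_pi ha))
  exact Continuous.comp (continuous_of_discreteTopology
    (f := fun p : Bool × ℕ => (p.1 && decide (0 < p.2)))) h1

lemma isClosed_F1 {Q : Type*} [TopologicalSpace Q] {a b : Q → ℕ → Bool}
    (ha : ∀ n, Continuous fun q => a q n) (hb : ∀ n, Continuous fun q => b q n) :
    IsClosed {q | F1 (toSet (a q)) (toSet (b q))} := by
  have : {q | F1 (toSet (a q)) (toSet (b q))}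
      = ⋂ n, {q | b q n = (a q n && decide (cnt (toSet (a q)) n % 2 = 1))} := by
    ext q; simp only [Set.mem_iInter, Set.mem_setOf_eq, F1_iff]
  rw [this]
  refine isClosed_iInter fun n => isClosed_eq (hb n) ?_
  have h1 : Continuous fun q => (a q n, cnt (toSet (a q)) n) :=
    (ha n).prodMk ((continuous_cnt n).comp (continuous_pi ha))
  exact Continuous.comp (continuous_of_discreteTopology
    (f := fun p : Bool × ℕ => (p.1 && decide (p.2 % 2 = 1)))) h1

lemma isClosed_Cset (k : ℕ) (ss : ℕ → List Bool) : IsClosed (Cset k ss) := by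
  have c1 : ∀ i : ℕ, ∀ n : ℕ,
      Continuous (fun q : (ℕ → ℕ → Bool) × (P × P) => q.1 i n) := fun i n =>
    (continuous_apply n).comp ((continuous_apply i).comp continuous_fst)
  have cY : ∀ n : ℕ, Continuous (fun q : (ℕ → ℕ → Bool) × (P × P) => (q.2.2.1 : ℕ → Bool) n) :=
    fun n => (continuous_apply n).comp
      (continuous_subtype_val.comp (continuous_snd.comp continuous_snd))
  have cX : ∀ n : ℕ, Continuous (fun q : (ℕ → ℕ → Bool) × (P × P) => (q.2.1.1 : ℕ → Bool) n) :=
    fun n => (continuous_apply n).comp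
      (continuous_subtype_val.comp (continuous_fst.comp continuous_snd))
  have h1 : IsClosed {q : (ℕ → ℕ → Bool) × (P × P) | ∀ j, q.1 0 j = q.2.1.1 j} := by
    have : {q : (ℕ → ℕ → Bool) × (P × P) | ∀ j, q.1 0 j = q.2.1.1 j}
        = ⋂ j, {q | q.1 0 j = q.2.1.1 j} := by ext q; simp
    rw [this]
    exact isClosed_iInter fun j => isClosed_eq (c1 0 j) (cX j)
  have h2 : IsClosed {q : (ℕ → ℕ → Bool) × (P × P) | ∀ j, q.1 (k-1) j = q.2.2.1 j} := by
    have : {q : (ℕ → ℕ → Bool) × (P × P) | ∀ j, q.1 (k-1) j = q.2.2.1 j}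
        = ⋂ j, {q | q.1 (k-1) j = q.2.2.1 j} := by ext q; simp
    rw [this]
    exact isClosed_iInter fun j => isClosed_eq (c1 (k-1) j) (cY j)
  have h3 : IsClosed {q : (ℕ → ℕ → Bool) × (P × P) |
      ∀ i < k, ∀ m, gfun (ss i) (cnt (toSet q.2.2.1) m) ≤ cnt (toSet (q.1 i)) m} := by
    have : {q : (ℕ → ℕ → Bool) × (P × P) |
        ∀ i < k, ∀ m, gfun (ss i) (cnt (toSet q.2.2.1) m) ≤ cnt (toSet (q.1 i)) m}
        = ⋂ i, ⋂ (_ : i < k), ⋂ m,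
          {q | gfun (ss i) (cnt (toSet q.2.2.1) m) ≤ cnt (toSet (q.1 i)) m} := by
      ext q; simp
    rw [this]
    refine isClosed_iInter fun i => isClosed_iInter fun _ => isClosed_iInter fun m => ?_
    refine isClosed_le ?_ ?_
    · exact Continuous.comp (continuous_of_discreteTopology (f := gfun (ss i)))
        ((continuous_cnt m).comp (continuous_pi cY))
    · exact (continuous_cnt m).comp (continuous_pi (fun n => c1 i n))
  have h4 : IsClosed {q : (ℕ → ℕ → Bool) × (P × P) |
      ∀ i, i+1 < k → G' (toSet (q.1 i)) (toSet (q.1 (i+1)))} := by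
    have : {q : (ℕ → ℕ → Bool) × (P × P) |
        ∀ i, i+1 < k → G' (toSet (q.1 i)) (toSet (q.1 (i+1)))}
        = ⋂ i, ⋂ (_ : i+1 < k), {q | G' (toSet (q.1 i)) (toSet (q.1 (i+1)))} := by
      ext q; simp
    rw [this]
    refine isClosed_iInter fun i => isClosed_iInter fun _ => ?_
    have e : {q : (ℕ → ℕ → Bool) × (P × P) | G' (toSet (q.1 i)) (toSet (q.1 (i+1)))}
        = {q | F0 (toSet (q.1 i)) (toSet (q.1 (i+1)))}
        ∪ {q | F1 (toSet (q.1 i)) (toSet (q.1 (i+1)))}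
        ∪ {q | F0 (toSet (q.1 (i+1))) (toSet (q.1 i))}
        ∪ {q | F1 (toSet (q.1 (i+1))) (toSet (q.1 i))} := by
      ext q; simp [G']; tauto
    rw [e]
    exact (((isClosed_F0 (c1 i) (c1 (i+1))).union (isClosed_F1 (c1 i) (c1 (i+1)))).union
      (isClosed_F0 (c1 (i+1)) (c1 i))).union (isClosed_F1 (c1 (i+1)) (c1 i))
  have e : Cset k ss = ({q : (ℕ → ℕ → Bool) × (P × P) | ∀ j, q.1 0 j = q.2.1.1 j}
      ∩ {q | ∀ j, q.1 (k-1) j = q.2.2.1 j}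
      ∩ {q | ∀ i < k, ∀ m, gfun (ss i) (cnt (toSet q.2.2.1) m) ≤ cnt (toSet (q.1 i)) m}
      ∩ {q | ∀ i, i+1 < k → G' (toSet (q.1 i)) (toSet (q.1 (i+1)))}) := by
    ext q
    simp only [Cset, Set.mem_inter_iff, Set.mem_setOf_eq]
    tauto
  rw [e]
  exact ((h1.inter h2).inter h3).inter h4

def Tn (n : ℕ) : Set (ℕ → List Bool) :=
  {ss | (∀ i, (ss i).length ≤ n) ∧ ∀ i, n ≤ i → ss i = []}

lemma Tn_finite (n : ℕ) : (Tn n).Finite := by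
  have hL : {l : List Bool | l.length ≤ n}.Finite := List.finite_length_le Bool n
  have himg : ((fun ss : ℕ → List Bool => fun i : Fin n => ss i) '' Tn n).Finite := by
    apply Set.Finite.subset (Set.Finite.pi (fun _ : Fin n => hL))
    rintro g ⟨ss, hss, rfl⟩
    intro i _
    exact hss.1 i
  refine Set.Finite.of_finite_image himg ?_
  rintro s hs t ht hst
  funext i
  rcases Nat.lt_or_ge i n with h | h
  · exact congrFun hst ⟨i, h⟩
  · rw [hs.2 i h, ht.2 i h]

open scoped Classical in
lemma toSet_decide (x : Set ℕ) : toSet (fun j => decide (j ∈ x)) = x := by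
  ext j; simp [toSet]

open scoped Classical in
lemma Rn_eq (n : ℕ) :
    Rn n = ⋃ k ∈ Set.Icc 1 n, ⋃ ss ∈ Tn n, Prod.snd '' Cset k ss := by
  ext p
  simp only [Set.mem_iUnion, Set.mem_image, Rn, Set.mem_setOf_eq, Set.mem_Icc]
  constructor
  · rintro ⟨k, hk0, hkn, xs, ss, h1, h2, h3, h4⟩
    have hY : (toSet p.2.1).Infinite := p.2.2
    refine ⟨k, ⟨hk0, hkn⟩, (fun i => if i < k then ss i else []), ?_, ?_⟩
    · refine ⟨fun i => ?_, fun i hi => ?_⟩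
      · by_cases h : i < k
        · simpa [h] using (h3 i h).1
        · simp [h]
      · have : ¬ i < k := by omega
        simp [this]
    · refine ⟨((fun i j => decide (j ∈ xs i)), p), ?_, rfl⟩
      have hts : ∀ i, toSet (fun j => decide (j ∈ xs i)) = xs i := fun i => toSet_decide _
      refine ⟨?_, ?_, ?_, ?_⟩
      · intro j
        have := congrArg (fun s => j ∈ s) h1
        simp only [toSet, Set.mem_setOf_eq] at this
        simp only [this]
        exact Bool.decide_coe _
      · intro j
        have := congrArg (fun s => j ∈ s) h2
        simp only [toSet, Set.mem_setOf_eq] at this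
        simp only [this]
        exact Bool.decide_coe _
      · intro i hik m
        simp only [hts, if_pos hik]
        have h5 := (h3 i hik).2
        have h6 := (sle_iff_cnt (Siter_infinite hY (ss i))).mp ⟨h5.1, h5.2⟩ m
        rwa [cnt_Siter hY] at h6
      · intro i hik
        rw [hts, hts]
        exact (G_iff_G' (h3 i (by omega)).2.1 (h3 (i+1) hik).2.1).mp (h4 i hik)
  · rintro ⟨k, ⟨hk1, hkn⟩, ss, hss, q, hq, hq2⟩
    have hY : (toSet p.2.1).Infinite := p.2.2
    obtain ⟨c1, c2, c3, c4⟩ := hq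
    rw [hq2] at c1 c2 c3
    have hinf : ∀ i < k, (toSet (q.1 i)).Infinite ∧ sle (toSet (q.1 i)) (Siter (ss i) (toSet p.2.1)) := by
      intro i hik
      apply (sle_iff_cnt (Siter_infinite hY (ss i))).mpr
      intro m
      rw [cnt_Siter hY]
      exact c3 i hik m
    refine ⟨k, by omega, hkn, (fun i => toSet (q.1 i)), ss, ?_, ?_, ?_, ?_⟩
    · ext j; simp only [toSet, Set.mem_setOf_eq, c1 j]
    · ext j; simp only [toSet, Set.mem_setOf_eq, c2 j]
    · exact fun i hik => ⟨hss.1 i, hinf i hik⟩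
    · intro i hik
      exact (G_iff_G' (hinf i (by omega)).1 (hinf (i+1) hik).1).mpr (c4 i hik)

lemma isClosed_Rn (n : ℕ) : IsClosed (Rn n) := by
  rw [Rn_eq]
  refine Set.Finite.isClosed_biUnion (Set.finite_Icc 1 n) fun k _ => ?_
  refine Set.Finite.isClosed_biUnion (Tn_finite n) fun ss _ => ?_
  exact isClosedMap_snd_of_compactSpace _ (isClosed_Cset k ss)

def Ch (a b : Set ℕ) : Prop :=
  ∃ k, 0 < k ∧ ∃ xs : ℕ → Set ℕ, xs 0 = a ∧ xs (k-1) = b ∧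
    (∀ i < k, (xs i).Infinite) ∧ (∀ i, i+1 < k → G (xs i) (xs (i+1)))

lemma G_symm {x y : Set ℕ} (h : G x y) : G y x := by
  unfold G at *; tauto

lemma G_to_E {x y : Set ℕ} (h : G x y) (hx : x.Infinite) (hy : y.Infinite) : E x y := by
  rcases h with h|h|h|h
  · exact Relation.EqvGen.rel _ _ ⟨hx, Or.inl h⟩
  · exact Relation.EqvGen.rel _ _ ⟨hx, Or.inr h⟩
  · exact Relation.EqvGen.symm _ _ (Relation.EqvGen.rel _ _ ⟨hy, Or.inl h⟩)
  · exact Relation.EqvGen.symm _ _ (Relation.EqvGen.rel _ _ ⟨hy, Or.inr h⟩)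

lemma chain_E : ∀ k : ℕ, ∀ xs : ℕ → Set ℕ, 0 < k → (∀ i < k, (xs i).Infinite) →
    (∀ i, i+1 < k → G (xs i) (xs (i+1))) → E (xs 0) (xs (k-1)) := by
  intro k
  induction k with
  | zero => intro xs h; omega
  | succ k ih =>
    intro xs _ hinf hG
    rcases Nat.eq_zero_or_pos k with rfl | hk
    · exact Relation.EqvGen.refl _
    · have e1 : E (xs 0) (xs (k-1)) :=
        ih xs hk (fun i hi => hinf i (by omega)) (fun i hi => hG i (by omega))
      have hGk : G (xs (k-1)) (xs k) := by
        have h := hG (k-1) (by omega)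
        have e : k - 1 + 1 = k := by omega
        rwa [e] at h
      have e2 : E (xs (k-1)) (xs k) :=
        G_to_E hGk (hinf (k-1) (by omega)) (hinf k (by omega))
      exact Relation.EqvGen.trans _ _ _ e1 e2

lemma Ch_to_E {a b : Set ℕ} (h : Ch a b) : E a b := by
  obtain ⟨k, hk, xs, h0, h1, hinf, hG⟩ := h
  subst h0 h1
  exact chain_E k xs hk hinf hG

lemma E_to_Ch {a b : Set ℕ} (h : E a b) : a = b ∨ (a.Infinite ∧ b.Infinite ∧ Ch a b) := by
  induction h with
  | rel x y hxy =>
    right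
    have hx := hxy.1
    have hy : y.Infinite := by
      rcases hxy.2 with rfl|rfl
      · exact S0_infinite hx
      · exact S1_infinite hx
    refine ⟨hx, hy, 2, by omega, (fun i => if i = 0 then x else y), by simp, by simp, ?_, ?_⟩
    · intro i hi
      by_cases h : i = 0 <;> simp [h, hx, hy]
    · intro i hi
      have hi0 : i = 0 := by omega
      subst hi0
      simp only [if_pos rfl, if_neg one_ne_zero]
      rcases hxy.2 with rfl|rfl
      · exact Or.inl rfl
      · exact Or.inr (Or.inl rfl)
  | refl x => left; rfl
  | symm x y _ ih =>
    rcases ih with rfl | ⟨hx, hy, k, hk, xs, h0, h1, hinf, hG⟩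
    · left; rfl
    right
    refine ⟨hy, hx, k, hk, (fun i => xs (k-1-i)), by simpa, ?_, ?_, ?_⟩
    · simpa using h0
    · intro i hi; exact hinf _ (by omega)
    · intro i hi
      have h2 : (k-1-(i+1)) + 1 = k-1-i := by omega
      have h3 := hG (k-1-(i+1)) (by omega)
      rw [h2] at h3
      exact G_symm h3
  | trans x y z _ _ ih1 ih2 =>
    rcases ih1 with rfl | ⟨hx, hy, k1, hk1, xs1, g0, g1, ginf, gG⟩
    · exact ih2
    rcases ih2 with rfl | ⟨_, hz, k2, hk2, xs2, f0, f1, finf, fG⟩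
    · exact Or.inr ⟨hx, hy, k1, hk1, xs1, g0, g1, ginf, gG⟩
    right
    refine ⟨hx, hz, k1 + k2 - 1, by omega,
      (fun i => if i ≤ k1 - 1 then xs1 i else xs2 (i - (k1-1))), ?_, ?_, ?_, ?_⟩
    · simp only [if_pos (Nat.zero_le _)]; exact g0
    · by_cases h : k1 + k2 - 1 - 1 ≤ k1 - 1
      · have hk2' : k2 = 1 := by omega
        have : xs2 (k2 - 1) = xs2 0 := by rw [hk2']
        simp only [if_pos h]
        have e : k1 + k2 - 1 - 1 = k1 - 1 := by omega
        rw [e, g1, ← f0, ← this]; exact f1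
      · simp only [if_neg h]
        have e : k1 + k2 - 1 - 1 - (k1 - 1) = k2 - 1 := by omega
        rw [e, f1]
    · intro i hi
      by_cases h : i ≤ k1 - 1
      · simp only [if_pos h]; exact ginf i (by omega)
      · simp only [if_neg h]; exact finf _ (by omega)
    · intro i hi
      by_cases h1 : i + 1 ≤ k1 - 1
      · simp only [if_pos h1, if_pos (show i ≤ k1 - 1 by omega)]
        exact gG i (by omega)
      · by_cases h2 : i ≤ k1 - 1
        · have hik : i = k1 - 1 := by omega
          simp only [if_pos h2, if_neg h1]
          have e1 : i + 1 - (k1 - 1) = 1 := by omega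
          rw [e1, hik, g1, ← f0]
          exact fG 0 (by omega)
        · simp only [if_neg h2, if_neg h1]
          have e1 : i + 1 - (k1 - 1) = (i - (k1 - 1)) + 1 := by omega
          rw [e1]
          exact fG (i - (k1-1)) (by omega)

lemma chain_bound {k : ℕ} {xs : ℕ → Set ℕ} {b : Set ℕ}
    (hkb : xs (k-1) = b) (hb : b.Infinite) (hinf : ∀ i < k, (xs i).Infinite)
    (hG : ∀ i, i+1 < k → G (xs i) (xs (i+1))) :
    ∀ i < k, ∃ s : List Bool, s.length ≤ k - 1 - i ∧ sle (xs i) (Siter s b) := by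
  have key : ∀ d i, i < k → k - 1 - i = d →
      ∃ s : List Bool, s.length ≤ d ∧ sle (xs i) (Siter s b) := by
    intro d
    induction d with
    | zero =>
      intro i hi he
      have : i = k - 1 := by omega
      subst this
      exact ⟨[], by simp, by rw [hkb]; exact sle_refl b⟩
    | succ d ih =>
      intro i hi he
      have hi1 : i + 1 < k := by omega
      obtain ⟨s, hs1, hs2⟩ := ih (i+1) hi1 (by omega)
      have hxi : (xs i).Infinite := hinf i hi
      have hxi1 : (xs (i+1)).Infinite := hinf (i+1) hi1
      have hSi : (Siter s b).Infinite := Siter_infinite hb s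
      rcases hG i hi1 with h|h|h|h
      · exact ⟨s, by omega, sle_trans (by rw [h]; exact sle_S0_self hxi) hs2⟩
      · exact ⟨s, by omega, sle_trans (by rw [h]; exact sle_S1_self hxi) hs2⟩
      · refine ⟨s ++ [false], by simp; omega, ?_⟩
        rw [Siter_append, h]
        exact sle_mono hxi1 hSi hs2 false
      · refine ⟨s ++ [true], by simp; omega, ?_⟩
        rw [Siter_append, h]
        exact sle_mono hxi1 hSi hs2 true
  intro i hi
  exact key (k-1-i) i hi rfl


theorem stmt12 :
    (∀ n, IsClosed (Rn n)) ∧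
    ∀ p : {f : ℕ → Bool // (toSet f).Infinite} × {f : ℕ → Bool // (toSet f).Infinite},
      E (toSet p.1.1) (toSet p.2.1) ↔ ∃ n, p ∈ Rn n := by
  refine ⟨isClosed_Rn, fun p => ?_⟩
  constructor
  · intro hE
    rcases E_to_Ch hE with heq | ⟨_, _, k, hk, xs, h0, h1, hinf, hG⟩
    · refine ⟨1, 1, one_pos, le_refl 1, (fun _ => toSet p.2.1), (fun _ => []), ?_, rfl, ?_, ?_⟩
      · exact heq.symm
      · intro i hi
        exact ⟨by simp, p.2.2, sle_refl _⟩
      · intro i hi; omega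
    · have hb : (toSet p.2.1).Infinite := p.2.2
      have hbound := chain_bound h1 hb hinf hG
      choose s hs1 hs2 using hbound
      refine ⟨k, k, hk, le_refl k, xs, (fun i => if h : i < k then s i h else []),
        h0, h1, ?_, hG⟩
      intro i hi
      refine ⟨?_, hinf i hi, ?_⟩
      · simp only [dif_pos hi]
        have := hs1 i hi
        omega
      · simp only [dif_pos hi]
        exact hs2 i hi
  · rintro ⟨n, k, hk, hkn, xs, ss, h0, h1, h3, h4⟩
    apply Ch_to_E
    exact ⟨k, hk, xs, h0, h1, (fun i hi => (h3 i hi).2.1), h4⟩
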